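/- arXiv:2108.02295 — 3 statements merged into one kernel-verified Lean document; each statement's English description precedes it below -/
import Mathlib

section
/- Let M ⊆ ℕ be a finite nonempty set such that the underlying undirected graph of (M, E(M)) is connected, and let p be a prime number. If (M, E(M)) satisfies property (S_p), then it satisfies property (T_p). (Lemma 2.7 (a)) -/
open Polynomial TensorProduct

namespace WeightPaper

/-! ### Directed graphs on finite sets of natural numbers -/

/-- A `p`-edge from `m₁` to `m₂`: `p` is prime, `m₂ ∣ m₁` and `m₁/m₂` is a
positive power of `p`. -/
def PEdge (p m₁ m₂ : ℕ) : Prop :=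
  p.Prime ∧ m₂ ∣ m₁ ∧ ∃ e : ℕ, 1 ≤ e ∧ m₁ = m₂ * p ^ e

/-- An edge of the graph `(M, E(M))` (forgetting the prime). -/
def GEdge (m₁ m₂ : ℕ) : Prop := ∃ p : ℕ, PEdge p m₁ m₂

/-- The undirected graph on the vertex set `M` underlying a directed edge
relation `E`. -/
def graphOn (M : Finset ℕ) (E : ℕ → ℕ → Prop) : SimpleGraph {x : ℕ // x ∈ M} where
  Adj a b := a ≠ b ∧ (E a.1 b.1 ∨ E b.1 a.1)
  symm := ⟨fun a b h => ⟨Ne.symm h.1, Or.symm h.2⟩⟩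
  loopless := ⟨fun a h => h.1 rfl⟩

/-- The underlying undirected graph of `(M, E(M))`. -/
def fullGraph (M : Finset ℕ) : SimpleGraph {x : ℕ // x ∈ M} := graphOn M GEdge

/-- The underlying undirected graph of `(M, E(M))` with all `p`-edges removed.
Its connected components are the `p`-planes. -/
def planeGraph (M : Finset ℕ) (p : ℕ) : SimpleGraph {x : ℕ // x ∈ M} :=
  graphOn M (fun a b => GEdge a b ∧ ¬ PEdge p a b)

/-- A highest `p`-plane: a `p`-plane at no vertex of which a `p`-edge ends. -/
def IsHighestPPlane (M : Finset ℕ) (p : ℕ) (c : (planeGraph M p).ConnectedComponent) : Prop :=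
  ∀ (m₁ : ℕ), m₁ ∈ M → ∀ (m₂ : ℕ) (h₂ : m₂ ∈ M),
    PEdge p m₁ m₂ → (planeGraph M p).connectedComponentMk ⟨m₂, h₂⟩ ≠ c

/-- Property `(T_p)`: there is exactly one highest `p`-plane. -/
def PropT (M : Finset ℕ) (p : ℕ) : Prop := ∃! c, IsHighestPPlane M p c

/-- A highest `p`-edge (in `M`): a `p`-edge from `m₁` to `m₂` such that no
`p`-edge of the graph ends at `m₁`. -/
def IsHighestPEdge (M : Finset ℕ) (p m₁ m₂ : ℕ) : Prop :=
  PEdge p m₁ m₂ ∧ ∀ m₀ ∈ M, ¬ PEdge p m₀ m₁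

/-- The underlying undirected graph of `(M, E(M))` with all highest `p`-edges
removed. -/
def spGraph (M : Finset ℕ) (p : ℕ) : SimpleGraph {x : ℕ // x ∈ M} :=
  graphOn M (fun a b => GEdge a b ∧ ¬ IsHighestPEdge M p a b)

/-- Property `(S_p)`: the graph `(M, E(M) - {highest p-edges})` has at most two
connected components. -/
def PropS (M : Finset ℕ) (p : ℕ) : Prop :=
  ∀ c₁ c₂ c₃ : (spGraph M p).ConnectedComponent, c₁ = c₂ ∨ c₁ = c₃ ∨ c₂ = c₃

/-- Condition (I). -/
def ConditionI (M : Finset ℕ) : Prop :=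
  (fullGraph M).Connected ∧ PropS M 2 ∧ ∀ p : ℕ, p.Prime → 3 ≤ p → PropT M p

/-- The vertex set of a connected component of `(M, E(M))`, as a `Finset ℕ`. -/
noncomputable def compSet (M : Finset ℕ) (c : (fullGraph M).ConnectedComponent) : Finset ℕ :=
  @Finset.filter ℕ (fun m => ∃ h : m ∈ M, (fullGraph M).connectedComponentMk ⟨m, h⟩ = c)
    (Classical.decPred _) M

/-- Condition (II). -/
def ConditionII (M : Finset ℕ) : Prop :=
  ∃ c₁ c₂ : (fullGraph M).ConnectedComponent, c₁ ≠ c₂ ∧ (∀ c, c = c₁ ∨ c = c₂) ∧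
    (∀ m₁ ∈ compSet M c₁, ∀ m₂ ∈ compSet M c₁, ¬ PEdge 2 m₁ m₂) ∧
    (∀ m₁ ∈ compSet M c₂, ∀ m₂ ∈ compSet M c₂, ¬ PEdge 2 m₁ m₂) ∧
    (∀ p : ℕ, p.Prime → 3 ≤ p → PropT (compSet M c₁) p ∧ PropT (compSet M c₂) p) ∧
    (Nat.gcd ((compSet M c₁).lcm id) ((compSet M c₂).lcm id) = 1 ∨
      Nat.gcd ((compSet M c₁).lcm id) ((compSet M c₂).lcm id) = 2) ∧
    ((compSet M c₁).lcm id).factorization 2 < ((compSet M c₂).lcm id).factorization 2 ∧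
    (((compSet M c₁).lcm id).factorization 2 = 0 ∨ ((compSet M c₁).lcm id).factorization 2 = 1)

/-! ### Excellent orders -/

/-- An excellent order on `{0, 1, …, s}`, given by its data `s` and
`S(≻) ⊆ {1, …, s}`. -/
structure ExcellentOrder where
  s : ℕ
  S : Finset ℕ
  hS : S ⊆ Finset.Icc 1 s

/-- The strict order `a ≻ b` determined by an excellent order: the elements of
`S(≻)` come first, in decreasing natural order, then `0`, then the remaining
elements of `{0, …, s}`, in increasing natural order. -/
def ExcellentOrder.gt (E : ExcellentOrder) (a b : ℕ) : Prop :=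
  (a ∈ E.S ∧ b ∈ E.S ∧ b < a) ∨ (a ∈ E.S ∧ b ∉ E.S) ∨ (a ∉ E.S ∧ b ∉ E.S ∧ a < b)

/-- The maximal element `s⁺(≻)` of `{0, …, s}` with respect to `≻`. -/
noncomputable def ExcellentOrder.sPlus (E : ExcellentOrder) : ℕ :=
  if h : E.S.Nonempty then E.S.max' h else 0

/-- The tensor product of two excellent orders. -/
def ExcellentOrder.tensor (E₁ E₂ : ExcellentOrder) : ExcellentOrder where
  s := max E₁.s E₂.s
  S := (E₁.S ∪ E₂.S) \ (E₁.S ∩ E₂.S)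
  hS := by
    intro x hx
    simp only [Finset.mem_sdiff, Finset.mem_union] at hx
    rcases hx.1 with h | h
    · have h' := E₁.hS h
      simp only [Finset.mem_Icc] at h' ⊢
      omega
    · have h' := E₂.hS h
      simp only [Finset.mem_Icc] at h' ⊢
      omega

/-- A set `K ⊆ ℕ₀` is subset compatible with an excellent order `≻` on
`{0, …, s}` if `K = {0, …, s}` or `K = {k ∈ {0, …, s} | k ≻ k₀}` for some
`k₀ ∈ {0, …, s}`. -/
def SubsetCompatible (E : ExcellentOrder) (K : Set ℕ) : Prop :=
  K = {k : ℕ | k ≤ E.s} ∨ ∃ k₀ ≤ E.s, K = {k : ℕ | k ≤ E.s ∧ E.gt k k₀}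

/-- `π_p(m) = m · p^{-v_p(m)}`. -/
def piP (p m : ℕ) : ℕ := m / p ^ (m.factorization p)

/-- The quadrant `V((≻_p)_{p ∈ P})`. -/
def Vset (P : Finset ℕ) (exc : ℕ → ExcellentOrder) : Set ℕ :=
  { m : ℕ | ∃ k : ℕ → ℕ, (∀ p ∈ P, k p ≤ (exc p).s) ∧ m = ∏ p ∈ P, p ^ k p }

/-- The edge relation `E_V` of the graph `(V, E_V)`. -/
def EV (P : Finset ℕ) (exc : ℕ → ExcellentOrder) (ma mb : ℕ) : Prop :=
  ma ∈ Vset P exc ∧ mb ∈ Vset P exc ∧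
    ∃ p ∈ P, piP p ma = piP p mb ∧ (exc p).gt (ma.factorization p) (mb.factorization p)

/-- The center `v_V = ∏_{p ∈ P} p^{s⁺(≻_p)}`. -/
noncomputable def vV (P : Finset ℕ) (exc : ℕ → ExcellentOrder) : ℕ :=
  ∏ p ∈ P, p ^ (exc p).sPlus

/-- Compatibility of a finite nonempty set `M ⊆ ℕ` with a tuple of excellent
orders. -/
def FinsetCompatible (P : Finset ℕ) (exc : ℕ → ExcellentOrder) (M : Finset ℕ) : Prop :=
  (↑M : Set ℕ) ⊆ Vset P exc ∧
    ∀ p : ℕ, p.Prime → (∃ m ∈ M, p ∣ m) →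
      ∀ m₀ : ℕ, (∃ m ∈ M, m₀ = piP p m) →
        SubsetCompatible (exc p) {k : ℕ | m₀ * p ^ k ∈ M}

/-- Compatibility of a map `ψ : ℕ → ℕ₀` (with finite support) with a tuple of
excellent orders. -/
def PsiCompatible (P : Finset ℕ) (exc : ℕ → ExcellentOrder) (ψ : ℕ → ℕ) : Prop :=
  Function.support ψ ⊆ Vset P exc ∧ ∀ ma mb : ℕ, EV P exc ma mb → ψ mb ≤ ψ ma

/-- A covering `(M₁, …, M_l)` of `ψ`. -/
def IsCovering (ψ : ℕ → ℕ) {l : ℕ} (Ms : Fin l → Finset ℕ) : Prop :=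
  (∀ j, (Ms j).Nonempty) ∧
    ∀ m : ℕ, ψ m = (Finset.univ.filter (fun j => m ∈ Ms j)).card

/-- `l_ψ := max(ψ(m) | m ∈ ℕ)`. -/
noncomputable def lpsi (ψ : ℕ → ℕ) (h : (Function.support ψ).Finite) : ℕ :=
  h.toFinset.sup ψ

/-- The `j`-th set `M_j^{(st)} = {m | ψ(m) ≥ j}` of the standard covering. -/
noncomputable def stdCov (ψ : ℕ → ℕ) (h : (Function.support ψ).Finite) (j : ℕ) : Finset ℕ :=
  h.toFinset.filter (fun m => j ≤ ψ m)

/-! ### Paths and centers of directed graphs -/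

/-- A vertex `w` is a center of the directed graph `(W, E)`: the graph has no
path from any vertex to itself, and there is a path from `w` to every other
vertex. A path is a tuple `(w₁, …, w_l)`, `l ≥ 2`, of vertices with
`(w_j, w_{j+1}) ∈ E`. -/
def HasCenter (W : Set ℕ) (E : ℕ → ℕ → Prop) (w : ℕ) : Prop :=
  w ∈ W ∧
    (¬ ∃ (l : List ℕ) (x : ℕ), 2 ≤ l.length ∧ l.Chain' E ∧ (∀ y ∈ l, y ∈ W) ∧
        l.head? = some x ∧ l.getLast? = some x) ∧
    (∀ x ∈ W, x ≠ w → ∃ l : List ℕ, 2 ≤ l.length ∧ l.Chain' E ∧ (∀ y ∈ l, y ∈ W) ∧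
        l.head? = some w ∧ l.getLast? = some x)

/-! ### Orlik blocks -/

/-- The underlying `ℤ`-module of the Orlik block of `M`:
`ℤ[X]/(∏_{m ∈ M} Φ_m)`. -/
@[reducible] noncomputable def OrlikModule (M : Finset ℕ) : Type :=
  Polynomial ℤ ⧸ Ideal.span {∏ m ∈ M, Polynomial.cyclotomic m ℤ}

/-- The automorphism `h_M` of the Orlik block: multiplication by the class
of `X`. -/
noncomputable def hMap (M : Finset ℕ) : Module.End ℤ (OrlikModule M) :=
  LinearMap.mulLeft ℤ
    (Ideal.Quotient.mk (Ideal.span {∏ m ∈ M, Polynomial.cyclotomic m ℤ}) Polynomial.X)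

/-- The direct sum `⊕_i h_{M_i}` on `⊕_i H_{M_i}` (realized as a Pi type). -/
noncomputable def piHM {l : ℕ} (Ms : Fin l → Finset ℕ) :
    Module.End ℤ ((i : Fin l) → OrlikModule (Ms i)) :=
  LinearMap.pi (fun i => (hMap (Ms i)).comp (LinearMap.proj i))

/-- `Aut_{S¹}(H_M, h_M) = {± h_M^k | k ∈ ℤ}`: every `ℤ`-module automorphism of
`H_M` commuting with `h_M` all of whose complex eigenvalues lie on the unit
circle is `± h_M^k` for some `k ∈ ℤ` (written here as
`φ ∘ h_M^l = ± h_M^k` with `k, l ∈ ℕ`). -/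
def AutIsSmall (M : Finset ℕ) : Prop :=
  ∀ φ : OrlikModule M ≃ₗ[ℤ] OrlikModule M,
    (φ.toLinearMap * hMap M = hMap M * φ.toLinearMap) →
    (∀ μ : ℂ, Module.End.HasEigenvalue (LinearMap.baseChange ℂ φ.toLinearMap) μ →
      ‖μ‖ = 1) →
    ∃ k l : ℕ, φ.toLinearMap * (hMap M) ^ l = (hMap M) ^ k ∨
      φ.toLinearMap * (hMap M) ^ l = - ((hMap M) ^ k)

/-! ### Tensor products of polynomials and of finitely supported maps -/

/-- The tensor product `f ⊗ g = ∏_{i,j} (t - κ_i λ_j)` of two unitary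
polynomials with roots `κ_i` resp. `λ_j`. -/
noncomputable def polyTensor (f g : Polynomial ℂ) : Polynomial ℂ :=
  ((f.roots.bind (fun κ => g.roots.map (fun μ => κ * μ))).map
    (fun r => Polynomial.X - Polynomial.C r)).prod

/-- `∏_{m} Φ_m^{ψ(m)}` over `ℂ`. -/
noncomputable def cycProd (ψ : ℕ → ℕ) (h : (Function.support ψ).Finite) : Polynomial ℂ :=
  ∏ m ∈ h.toFinset, (Polynomial.cyclotomic m ℂ) ^ (ψ m)

/-! ### Weight systems -/

/-- Condition (C2). -/
def CondC2 {n : ℕ} (v : Fin n → ℕ) (d : ℕ) : Prop :=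
  ∀ J : Finset (Fin n), J.Nonempty → ∃ K : Finset (Fin n), K.card = J.card ∧
    ∀ k ∈ K, ∃ α : Fin n → ℕ, ∑ i ∈ J, α i * v i = d - v k

/-- Condition (C2bar). -/
def CondC2bar {n : ℕ} (v : Fin n → ℕ) (d : ℕ) : Prop :=
  ∀ J : Finset (Fin n), J.Nonempty → ∃ K : Finset (Fin n), K.card = J.card ∧
    ∀ k ∈ K, ∃ α : Fin n → ℤ, ∑ i ∈ J, α i * (v i : ℤ) = (d : ℤ) - (v k : ℤ)

/-- The characteristic polynomial `Δ` of the monodromy, built from the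
generating polynomial `Q = ρ_{(v;d)} ∈ ℤ[t]`:
`Δ = ∏_k (t - e^{2πik/d})^{coeff_k Q}`. -/
noncomputable def Delta (d : ℕ) (Q : Polynomial ℤ) : Polynomial ℂ :=
  ∏ k ∈ Finset.range (Q.natDegree + 1),
    (Polynomial.X - Polynomial.C (Complex.exp (2 * Real.pi * Complex.I * k / d))) ^
      (Q.coeff k).toNat

/-- `ψ_w(m)`: the multiplicity of `e^{2πi/m}` as a root of `Δ` (and `0` for
`m = 0`). -/
noncomputable def psiW (d : ℕ) (Q : Polynomial ℤ) (m : ℕ) : ℕ :=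
  if m = 0 then 0
  else (Delta d Q).rootMultiplicity (Complex.exp (2 * Real.pi * Complex.I / m))

/-- The excellent order `≻_p^w` of Theorem 6.6, for the set `Mw = supp ψ_w`
and the reduced denominators `t_j` of the weights. -/
noncomputable def excW {n : ℕ} (t : Fin n → ℕ) (Mw : Finset ℕ) (p : ℕ) : ExcellentOrder where
  s := Mw.sup (fun m => m.factorization p)
  S := (Finset.Icc 1 (Mw.sup (fun m => m.factorization p))).filter
    (fun k => Odd ((Finset.univ.filter (fun j : Fin n => p ^ k ∣ t j)).card))
  hS := Finset.filter_subset _ _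

/-- The weighted-degree-`k` part `W_k` of `ℂ[x_1, …, x_n]`: the subspace of
polynomials all of whose monomials `x^α` satisfy `∑ v_i α_i = k`. -/
noncomputable def weightedHomog (n : ℕ) (v : Fin n → ℕ) (k : ℕ) : Submodule ℂ (MvPolynomial (Fin n) ℂ) where
  carrier := { f | ∀ α ∈ f.support, ∑ i, v i * α i = k }
  add_mem' := by
    intro a b ha hb α hα
    rcases Finset.mem_union.mp (MvPolynomial.support_add hα) with h | h
    · exact ha α h
    · exact hb α h
  zero_mem' := by
    intro α hα
    simp at hα
  smul_mem' := by
    intro c f hf α hα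
    exact hf α (MvPolynomial.support_smul hα)

/-!
The `p`-adic valuation is constant on `p`-planes and strictly decreases along `p`-edges, so the
plane of an element of `M` of maximal valuation is highest. A highest plane contains no target of
a `p`-edge, hence no edge leaving it survives the removal of the highest `p`-edges: it is a union
of components of that graph. By `(S_p)`, two distinct highest planes would then cover `M`, so `M`
would carry no `p`-edge at all; but then nothing was removed, and connectedness of `(M, E(M))`
joins the two planes.
-/

theorem _root_.SimpleGraph.Reachable.apply_eq_of_adj {V β : Type*} {G : SimpleGraph V}
    {f : V → β} (hf : ∀ ⦃a b⦄, G.Adj a b → f a = f b) {a b : V} (h : G.Reachable a b) :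
    f a = f b := by
  obtain ⟨w⟩ := h
  induction w with
  | nil => rfl
  | cons hadj _ ih => exact (hf hadj).trans ih

open SimpleGraph

lemma PEdge.factorization_lt {p m₁ m₂ : ℕ} (hm₂ : m₂ ≠ 0) (h : PEdge p m₁ m₂) :
    m₂.factorization p < m₁.factorization p := by
  obtain ⟨hp, -, e, he, rfl⟩ := h
  rw [Nat.factorization_mul hm₂ (pow_ne_zero _ hp.ne_zero), Finsupp.add_apply,
    hp.factorization_pow, Finsupp.single_eq_same]
  omega

lemma factorization_eq_of_gEdge_of_not_pEdge {p m₁ m₂ : ℕ} (hm₂ : m₂ ≠ 0) (hg : GEdge m₁ m₂)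
    (hnp : ¬ PEdge p m₁ m₂) : m₁.factorization p = m₂.factorization p := by
  obtain ⟨q, hq, hdvd, e, he, heq⟩ := hg
  have hqp : q ≠ p := by
    rintro rfl
    exact hnp ⟨hq, hdvd, e, he, heq⟩
  rw [heq, Nat.factorization_mul hm₂ (pow_ne_zero _ hq.ne_zero), Finsupp.add_apply,
    hq.factorization_pow, Finsupp.single_eq_of_ne hqp.symm, add_zero]

lemma factorization_eq_of_planeGraph_reachable {M : Finset ℕ} (h0 : 0 ∉ M) {p : ℕ}
    {a b : {x : ℕ // x ∈ M}} (h : (planeGraph M p).Reachable a b) :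
    a.1.factorization p = b.1.factorization p := by
  refine h.apply_eq_of_adj (f := fun x => x.1.factorization p) ?_
  rintro x y ⟨-, ⟨hg, hnp⟩ | ⟨hg, hnp⟩⟩
  · exact factorization_eq_of_gEdge_of_not_pEdge (ne_of_mem_of_not_mem y.2 h0) hg hnp
  · exact (factorization_eq_of_gEdge_of_not_pEdge (ne_of_mem_of_not_mem x.2 h0) hg hnp).symm

lemma isHighestPPlane_of_forall_factorization_le {M : Finset ℕ} (h0 : 0 ∉ M) {p m : ℕ}
    (hm : m ∈ M) (hmax : ∀ m' ∈ M, m'.factorization p ≤ m.factorization p) :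
    IsHighestPPlane M p ((planeGraph M p).connectedComponentMk ⟨m, hm⟩) := by
  intro m₁ h₁ m₂ h₂ hpe hplane
  have hv : m₂.factorization p = m.factorization p :=
    factorization_eq_of_planeGraph_reachable h0 (ConnectedComponent.exact hplane)
  have := hpe.factorization_lt (ne_of_mem_of_not_mem h₂ h0)
  have := hmax m₁ h₁
  omega

lemma exists_isHighestPPlane {M : Finset ℕ} (hM : M.Nonempty) (h0 : 0 ∉ M) (p : ℕ) :
    ∃ c, IsHighestPPlane M p c := by
  obtain ⟨m, hm, hmax⟩ := M.exists_max_image (fun m => m.factorization p) hM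
  exact ⟨_, isHighestPPlane_of_forall_factorization_le h0 hm hmax⟩

lemma fullGraph_le_spGraph {M : Finset ℕ} {p : ℕ}
    (h : ∀ m₁ ∈ M, ∀ m₂ ∈ M, ¬ PEdge p m₁ m₂) : fullGraph M ≤ spGraph M p := by
  rintro a b ⟨hne, hg | hg⟩
  · exact ⟨hne, Or.inl ⟨hg, fun hh => h a.1 a.2 b.1 b.2 hh.1⟩⟩
  · exact ⟨hne, Or.inr ⟨hg, fun hh => h b.1 b.2 a.1 a.2 hh.1⟩⟩

namespace IsHighestPPlane

variable {M : Finset ℕ} {p : ℕ} {c : (planeGraph M p).ConnectedComponent}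

lemma mk_eq_of_spGraph_adj (hc : IsHighestPPlane M p c) {a b : {x : ℕ // x ∈ M}}
    (hab : (spGraph M p).Adj a b) (ha : (planeGraph M p).connectedComponentMk a = c) :
    (planeGraph M p).connectedComponentMk b = c := by
  have hadj : (planeGraph M p).Adj a b := by
    refine ⟨hab.1, ?_⟩
    rcases hab.2 with ⟨hg, hnh⟩ | ⟨hg, hnh⟩
    · exact Or.inl ⟨hg, fun hpe => hnh ⟨hpe, fun m₀ h₀ hpe₀ => hc m₀ h₀ a.1 a.2 hpe₀ ha⟩⟩
    · exact Or.inr ⟨hg, fun hpe => hc b.1 b.2 a.1 a.2 hpe ha⟩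
  exact ha ▸ ConnectedComponent.sound hadj.symm.reachable

lemma mk_eq_of_spGraph_reachable (hc : IsHighestPPlane M p c) {a b : {x : ℕ // x ∈ M}}
    (hab : (spGraph M p).Reachable a b) (ha : (planeGraph M p).connectedComponentMk a = c) :
    (planeGraph M p).connectedComponentMk b = c :=
  (hab.apply_eq_of_adj (f := fun x => (planeGraph M p).connectedComponentMk x = c)
    fun _ _ hxy => propext ⟨hc.mk_eq_of_spGraph_adj hxy, hc.mk_eq_of_spGraph_adj hxy.symm⟩).mp ha

lemma eq (hconn : (fullGraph M).Connected) (hSp : PropS M p) (hc : IsHighestPPlane M p c)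
    {c' : (planeGraph M p).ConnectedComponent} (hc' : IsHighestPPlane M p c') : c = c' := by
  by_contra hne
  obtain ⟨x, rfl⟩ := c.exists_rep
  obtain ⟨y, rfl⟩ := c'.exists_rep
  have hxy : ¬ (spGraph M p).Reachable x y := fun h =>
    hne (hc.mk_eq_of_spGraph_reachable h rfl).symm
  have hcover : ∀ z,
      (planeGraph M p).connectedComponentMk z = (planeGraph M p).connectedComponentMk x ∨
        (planeGraph M p).connectedComponentMk z = (planeGraph M p).connectedComponentMk y := by
    intro z
    rcases hSp ((spGraph M p).connectedComponentMk z) ((spGraph M p).connectedComponentMk x)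
      ((spGraph M p).connectedComponentMk y) with h | h | h
    · exact Or.inl (hc.mk_eq_of_spGraph_reachable (ConnectedComponent.exact h).symm rfl)
    · exact Or.inr (hc'.mk_eq_of_spGraph_reachable (ConnectedComponent.exact h).symm rfl)
    · exact absurd (ConnectedComponent.exact h) hxy
  have hno_pEdge : ∀ m₁ ∈ M, ∀ m₂ ∈ M, ¬ PEdge p m₁ m₂ := fun m₁ h₁ m₂ h₂ hpe =>
    (hcover ⟨m₂, h₂⟩).elim (hc m₁ h₁ m₂ h₂ hpe) (hc' m₁ h₁ m₂ h₂ hpe)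
  exact hxy ((hconn.preconnected x y).mono (fullGraph_le_spGraph hno_pEdge))

end IsHighestPPlane

theorem statement0_general (M : Finset ℕ) (hM : M.Nonempty) (h0 : 0 ∉ M) (p : ℕ)
    (hconn : (fullGraph M).Connected) (hSp : PropS M p) : PropT M p := by
  obtain ⟨c, hc⟩ := exists_isHighestPPlane hM h0 p
  exact ⟨c, hc, fun _ hc' => (hc.eq hconn hSp hc').symm⟩

/-- Lemma 2.7 (a). -/
theorem statement0 (M : Finset ℕ) (hM : M.Nonempty) (h0 : 0 ∉ M) (p : ℕ) (hp : p.Prime)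
    (hconn : (fullGraph M).Connected) (hSp : PropS M p) : PropT M p :=
  statement0_general M hM h0 p hconn hSp

end WeightPaper
end

section
/- An integer weight system (v₁,…,v_n; d) satisfies condition (C2bar) if and only if the polynomial ∏_{j=1}^n (t^{v_j} − 1) divides the polynomial t^{v₁+⋯+v_n}·∏_{j=1}^n (t^{d−v_j} − 1) in ℤ[t], i.e. if and only if the rational function ρ_{(v;d)}(t) := t^{v₁+⋯+v_n}·∏_{j=1}^n (t^{d−v_j}−1)/(t^{v_j}−1) is a polynomial with integer coefficients. (Lemma 5.4 (c)) -/
open Polynomial TensorProduct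

/-! Both sides are equivalent to: for every `m ≥ 1`, at least as many of the `d - v_j` as of
the `v_j` are divisible by `m`. For (C2bar) this is because the integer combinations of
`(v_i)_{i ∈ J}` are the multiples of their gcd. For the divisibility, `t^w - 1 = ∏_{m ∣ w} Φ_m`
with the `Φ_m` pairwise non-associated primes of `ℤ[t]`, and `t^{v₁+⋯+v_n}` is coprime to every
`t^{v_j} - 1`. -/

section Bezout

variable {R ι : Type*} [CommRing R] [IsBezout R] [NormalizedGCDMonoid R]

theorem exists_sum_mul_eq_iff_gcd_dvd (s : Finset ι) (f : ι → R) (c : R) :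
    (∃ α : ι → R, ∑ i ∈ s, α i * f i = c) ↔ s.gcd f ∣ c := by
  constructor
  · rintro ⟨α, rfl⟩
    exact Finset.dvd_sum fun i hi => dvd_mul_of_dvd_right (Finset.gcd_dvd hi) _
  · rintro ⟨q, rfl⟩
    obtain ⟨β, hβ⟩ := s.gcd_eq_sum_mul f
    refine ⟨fun i => β i * q, ?_⟩
    rw [hβ, Finset.sum_mul]
    exact Finset.sum_congr rfl fun i _ => by ring

end Bezout

open Finset

theorem forall_exists_card_eq_iff_card_dvd_le {ι : Type*} [Fintype ι] [DecidableEq ι]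
    (f c : ι → ℤ) :
    (∀ J : Finset ι, J.Nonempty → ∃ K : Finset ι, #K = #J ∧
        ∀ k ∈ K, ∃ α : ι → ℤ, ∑ i ∈ J, α i * f i = c k) ↔
      ∀ m : ℕ, #{j | (m : ℤ) ∣ f j} ≤ #{j | (m : ℤ) ∣ c j} := by
  constructor
  · intro h m
    rcases eq_empty_or_nonempty ({j | (m : ℤ) ∣ f j} : Finset ι) with hJ | hJ
    · simp [hJ]
    obtain ⟨K, hKJ, hK⟩ := h _ hJ
    rw [← hKJ]
    refine card_le_card fun k hk => mem_filter.mpr ⟨mem_univ k, ?_⟩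
    obtain ⟨α, hα⟩ := hK k hk
    rw [← hα]
    exact dvd_sum fun i hi => dvd_mul_of_dvd_right (mem_filter.mp hi).2 _
  · intro h J _
    set m := (J.gcd f).natAbs
    have hJ : J ⊆ ({j | (m : ℤ) ∣ f j} : Finset ι) := fun j hj =>
      mem_filter.mpr ⟨mem_univ j, Int.natAbs_dvd.mpr (gcd_dvd hj)⟩
    obtain ⟨K, hKsub, hKJ⟩ := exists_subset_card_eq ((card_le_card hJ).trans (h m))
    refine ⟨K, hKJ, fun k hk => (exists_sum_mul_eq_iff_gcd_dvd J f (c k)).mpr ?_⟩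
    exact Int.natAbs_dvd.mp (mem_filter.mp (hKsub hk)).2

theorem Finset.prod_pow_dvd_prod_pow_iff {α ι : Type*} [CommMonoidWithZero α]
    [IsCancelMulZero α] {s : Finset ι} {p : ι → α} (hp : ∀ i ∈ s, Prime (p i))
    (hdvd : ∀ i ∈ s, ∀ j ∈ s, p i ∣ p j → i = j) {a b : ι → ℕ} :
    ∏ i ∈ s, p i ^ a i ∣ ∏ i ∈ s, p i ^ b i ↔ ∀ i ∈ s, a i ≤ b i := by
  classical
  refine ⟨fun h i hi => ?_,
    fun h => prod_dvd_prod_of_dvd _ _ fun i hi => pow_dvd_pow _ (h i hi)⟩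
  have hrest : ¬ p i ∣ ∏ j ∈ s.erase i, p j ^ b j := fun hi' => by
    obtain ⟨j, hj, hij⟩ := (hp i hi).exists_mem_finset_dvd hi'
    exact ne_of_mem_erase hj
      (hdvd i hi j (mem_of_mem_erase hj) ((hp i hi).dvd_of_dvd_pow hij)).symm
  have hi' := (dvd_prod_of_mem (fun j => p j ^ a j) hi).trans h
  rw [← mul_prod_erase s (fun j => p j ^ b j) hi] at hi'
  rw [← pow_dvd_pow_iff (hp i hi).ne_zero (hp i hi).not_isUnit]
  exact (hp i hi).pow_dvd_of_dvd_mul_right _ hrest hi'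

namespace Polynomial

theorem isCoprime_X_X_pow_sub_one {R : Type*} [CommRing R] {k : ℕ} (hk : 0 < k) :
    IsCoprime (X : R[X]) (X ^ k - 1) :=
  ⟨X ^ (k - 1), -1, by rw [← pow_succ, Nat.sub_add_cancel hk]; ring⟩

theorem eq_of_cyclotomic_dvd_cyclotomic {m m' : ℕ} (hm : 0 < m) (hm' : 0 < m')
    (h : cyclotomic m ℤ ∣ cyclotomic m' ℤ) : m = m' :=
  cyclotomic_injective <| eq_of_monic_of_associated (cyclotomic.monic m ℤ)
    (cyclotomic.monic m' ℤ) ((cyclotomic.irreducible hm).associated_of_dvd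
      (cyclotomic.irreducible hm') h)

theorem prod_X_pow_sub_one_eq_prod_cyclotomic {ι : Type*} [Fintype ι] {w : ι → ℕ}
    (hw : ∀ i, 0 < w i) {N : ℕ} (hN : ∀ i, w i ≤ N) :
    ∏ i, ((X : ℤ[X]) ^ w i - 1) = ∏ m ∈ Icc 1 N, cyclotomic m ℤ ^ #{i | m ∣ w i} := by
  classical
  rw [prod_congr rfl fun i _ => (prod_cyclotomic_eq_X_pow_sub_one (hw i) ℤ).symm]
  simp_rw [← prod_const]
  refine prod_comm' fun i m => ?_
  simp only [Nat.mem_divisors, mem_univ, mem_filter, mem_Icc, true_and]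
  exact ⟨fun ⟨hm, _⟩ =>
      ⟨hm, Nat.pos_of_dvd_of_pos hm (hw i), (Nat.le_of_dvd (hw i) hm).trans (hN i)⟩,
    fun ⟨hm, _⟩ => ⟨hm, (hw i).ne'⟩⟩

theorem prod_X_pow_sub_one_dvd_prod_iff {ι : Type*} [Fintype ι] {a b : ι → ℕ}
    (ha : ∀ i, 0 < a i) (hb : ∀ i, 0 < b i) :
    ∏ i, ((X : ℤ[X]) ^ a i - 1) ∣ ∏ i, ((X : ℤ[X]) ^ b i - 1) ↔
      ∀ m, 0 < m → #{i | m ∣ a i} ≤ #{i | m ∣ b i} := by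
  set N := univ.sup a ⊔ univ.sup b
  rw [prod_X_pow_sub_one_eq_prod_cyclotomic ha fun i => le_sup_of_le_left (le_sup (mem_univ i)),
    prod_X_pow_sub_one_eq_prod_cyclotomic hb fun i => le_sup_of_le_right (le_sup (mem_univ i)),
    prod_pow_dvd_prod_pow_iff (fun m hm => (cyclotomic.irreducible (mem_Icc.mp hm).1).prime)
      fun m hm m' hm' => eq_of_cyclotomic_dvd_cyclotomic (mem_Icc.mp hm).1 (mem_Icc.mp hm').1]
  refine ⟨fun h m hm => ?_, fun h m hm => h m (mem_Icc.mp hm).1⟩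
  by_cases hmN : m ≤ N
  · exact h m (mem_Icc.mpr ⟨hm, hmN⟩)
  · have : #{i | m ∣ a i} = 0 := card_eq_zero.mpr <| filter_eq_empty_iff.mpr fun i _ hi =>
      hmN ((Nat.le_of_dvd (ha i) hi).trans (le_sup_of_le_left (le_sup (mem_univ i))))
    omega

end Polynomial

namespace WeightPaper

theorem condC2bar_iff_card_dvd_le {n : ℕ} {v : Fin n → ℕ} {d : ℕ} (hvd : ∀ i, v i ≤ d) :
    CondC2bar v d ↔ ∀ m : ℕ, #{j | m ∣ v j} ≤ #{j | m ∣ d - v j} := by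
  have hsub (m : ℕ) (j : Fin n) : (m : ℤ) ∣ (d : ℤ) - v j ↔ m ∣ d - v j := by
    rw [← Nat.cast_sub (hvd j), Int.natCast_dvd_natCast]
  unfold CondC2bar
  rw [forall_exists_card_eq_iff_card_dvd_le]
  simp only [hsub, Int.natCast_dvd_natCast]

theorem statement8_general (n : ℕ) (v : Fin n → ℕ) (d : ℕ)
    (hv : ∀ i, 0 < v i) (hvd : ∀ i, v i < d) :
    CondC2bar v d ↔
      (∏ j : Fin n, ((Polynomial.X : Polynomial ℤ) ^ (v j) - 1)) ∣
        (Polynomial.X ^ (∑ j : Fin n, v j) *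
          ∏ j : Fin n, ((Polynomial.X : Polynomial ℤ) ^ (d - v j) - 1)) := by
  have hcop : IsCoprime (∏ j, ((X : ℤ[X]) ^ v j - 1)) (X ^ ∑ j, v j) :=
    (IsCoprime.prod_right fun j _ => isCoprime_X_X_pow_sub_one (hv j)).pow_left.symm
  have hdvd_mul {B : ℤ[X]} : ∏ j, ((X : ℤ[X]) ^ v j - 1) ∣ X ^ (∑ j, v j) * B ↔
      ∏ j, ((X : ℤ[X]) ^ v j - 1) ∣ B :=
    ⟨hcop.dvd_of_dvd_mul_left, (Dvd.dvd.mul_left · _)⟩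
  rw [condC2bar_iff_card_dvd_le fun i => (hvd i).le, hdvd_mul,
    prod_X_pow_sub_one_dvd_prod_iff hv fun j => Nat.sub_pos_of_lt (hvd j)]
  refine ⟨fun h m _ => h m, fun h m => ?_⟩
  rcases m.eq_zero_or_pos with rfl | hm
  · simp [(hv _).ne']
  · exact h m hm

/-- Lemma 5.4 (c). -/
theorem statement8 (n : ℕ) (hn : 1 ≤ n) (v : Fin n → ℕ) (d : ℕ)
    (hv : ∀ i, 0 < v i) (hvd : ∀ i, v i < d) :
    CondC2bar v d ↔
      (∏ j : Fin n, ((Polynomial.X : Polynomial ℤ) ^ (v j) - 1)) ∣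
        (Polynomial.X ^ (∑ j : Fin n, v j) *
          ∏ j : Fin n, ((Polynomial.X : Polynomial ℤ) ^ (d - v j) - 1)) :=
  statement8_general n v d hv hvd

end WeightPaper
end

section
/- Let (v₁,…,v_n; d) be an integer weight system satisfying condition (C2bar), and let P ∈ ℤ[t] be the polynomial with P(t)·∏_{j=1}^n (t^{v_j} − 1) = t^{v₁+⋯+v_n}·∏_{j=1}^n (t^{d−v_j} − 1). Then for every k ∈ ℕ₀, P(e^{2πik/d}) = (−1)^{n−|M(k)|}·μ(k); in particular, μ(k) is a positive integer for every k ∈ ℕ. (Lemma 5.4 (d)) -/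
/-!
Put `ζ = e^{2πik/d}`, so that `ζ ^ v j = 1` exactly when `t j ∣ k`. For these `j` both
`X^{v_j} - 1` and `X^{d - v_j} - 1` have the simple factor `X - ζ`; cancelling these factors from
the defining identity of `P` and evaluating at `ζ` replaces them by their derivatives
`v_j ζ⁻¹` and `(d - v_j) ζ⁻¹`. Every other `j` contributes `ζ^{v_j} (ζ^{d - v_j} - 1)` on the
right against `ζ^{v_j} - 1` on the left, i.e. a sign. Finally `μ(k) = ±P(ζ)` is a positive
rational algebraic integer, hence a positive integer.
-/

open Polynomial TensorProduct

namespace WeightPaper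

section RootCancellation

variable {R : Type*} [CommRing R]

theorem eval_divByMonic_X_sub_C_self (f : R[X]) (a : R) :
    (f /ₘ (X - C a)).eval a = (derivative f).eval a := by
  simpa using
    congrArg (eval a) (divByMonic_add_X_sub_C_mul_derivative_divByMonic_eq_derivative f a)

theorem prod_eq_X_sub_C_pow_mul_prod_divByMonic {ι : Type*} {s : Finset ι} {f : ι → R[X]}
    {a : R} (hf : ∀ i ∈ s, (f i).IsRoot a) :
    ∏ i ∈ s, f i = (X - C a) ^ s.card * ∏ i ∈ s, (f i /ₘ (X - C a)) := by
  rw [← Finset.prod_const, ← Finset.prod_mul_distrib]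
  exact Finset.prod_congr rfl fun i hi => ((mul_divByMonic_eq_iff_isRoot).2 (hf i hi)).symm

/-- A l'Hôpital rule for products: common simple factors `X - a` of the two sides are cancelled,
and each vanishing factor is replaced by its derivative at `a`. -/
theorem eval_mul_prod_derivative_eq_of_mul_prod_eq [IsDomain R] {ι : Type*} {s : Finset ι}
    {f g : ι → R[X]} {p q F G : R[X]} {a : R}
    (h : p * ((∏ i ∈ s, f i) * F) = q * ((∏ i ∈ s, g i) * G))
    (hf : ∀ i ∈ s, (f i).IsRoot a) (hg : ∀ i ∈ s, (g i).IsRoot a) :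
    p.eval a * ((∏ i ∈ s, (derivative (f i)).eval a) * F.eval a) =
      q.eval a * ((∏ i ∈ s, (derivative (g i)).eval a) * G.eval a) := by
  rw [prod_eq_X_sub_C_pow_mul_prod_divByMonic hf, prod_eq_X_sub_C_pow_mul_prod_divByMonic hg]
    at h
  have h' : p * ((∏ i ∈ s, (f i /ₘ (X - C a))) * F) =
      q * ((∏ i ∈ s, (g i /ₘ (X - C a))) * G) :=
    mul_left_cancel₀ (pow_ne_zero s.card (X_sub_C_ne_zero a)) (by linear_combination h)
  simpa only [eval_mul, eval_prod, eval_divByMonic_X_sub_C_self] using congrArg (eval a) h'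

end RootCancellation

theorem eval_derivative_X_pow_sub_one_of_pow_eq_one {K : Type*} [Field K] {ζ : K} {e : ℕ}
    (he : ζ ^ e = 1) : (derivative (X ^ e - 1 : K[X])).eval ζ = e * ζ⁻¹ := by
  cases e with
  | zero => simp
  | succ e =>
    have hζ : ζ ^ e = ζ⁻¹ := eq_inv_of_mul_eq_one_left (by rwa [← pow_succ])
    simp [hζ]

theorem exp_two_pi_I_mul_div_pow_eq_one_iff (k d e : ℕ) (hd : d ≠ 0) :
    Complex.exp (2 * Real.pi * Complex.I * k / d) ^ e = 1 ↔ d ∣ k * e := by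
  have hexp : Complex.exp (2 * Real.pi * Complex.I * k / d) =
      Complex.exp (2 * Real.pi * Complex.I / d) ^ k := by
    rw [← Complex.exp_nat_mul]; ring_nf
  rw [hexp, ← pow_mul, (Complex.isPrimitiveRoot_exp d hd).pow_eq_one_iff_dvd]

theorem dvd_iff_dvd_mul_of_mul_eq_mul {v t s d : ℕ} (hst : v * t = s * d)
    (hcop : s.Coprime t) (hd : 0 < d) (k : ℕ) : t ∣ k ↔ d ∣ k * v := by
  have ht : 0 < t := Nat.pos_of_ne_zero fun ht => by simp_all
  calc t ∣ k ↔ t ∣ k * s := hcop.symm.dvd_mul_right.symm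
    _ ↔ t * d ∣ k * s * d := (Nat.mul_dvd_mul_iff_right hd).symm
    _ ↔ d * t ∣ k * v * t := by rw [mul_comm t d, mul_assoc k v, hst, mul_assoc]
    _ ↔ d ∣ k * v := Nat.mul_dvd_mul_iff_right ht

theorem exists_nat_eq_of_isIntegral_ratCast {K : Type*} [Field K] [CharZero K] {q : ℚ}
    (hq : 0 < q) (h : IsIntegral ℤ (q : K)) : ∃ a : ℕ, 0 < a ∧ q = a := by
  rw [← eq_ratCast (algebraMap ℚ K), isIntegral_algebraMap_iff (algebraMap ℚ K).injective] at h
  obtain ⟨z, hz⟩ := IsIntegrallyClosed.isIntegral_iff.mp h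
  replace hz : (z : ℚ) = q := by simpa using hz
  lift z to ℕ using by exact_mod_cast (hz ▸ hq).le
  exact ⟨z, by exact_mod_cast hz ▸ hq, by simp [← hz]⟩

theorem isIntegral_aeval_exp_two_pi_I_mul_div (P : ℤ[X]) (k d : ℕ) :
    IsIntegral ℤ (aeval (Complex.exp (2 * Real.pi * Complex.I * k / d)) P) := by
  have hζ : IsIntegral ℤ (Complex.exp (2 * Real.pi * Complex.I * k / d)) := by
    convert Complex.isIntegral_exp_rat_mul_pi_mul_I (2 * k / d) using 2
    push_cast
    ring
  exact adjoin_le_integralClosure hζ (aeval_mem_adjoin_singleton ℤ _)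

theorem pow_sum_mul_prod_pow_sub_sub_one {K ι : Type*} [Field K] [DecidableEq K] [Fintype ι]
    {v : ι → ℕ} {d : ℕ} (hvd : ∀ j, v j ≤ d) {ζ : K} (hζ : ζ ^ d = 1) :
    ζ ^ (∑ j, v j) * ∏ j ∈ Finset.univ.filter (fun j => ¬ ζ ^ v j = 1), (ζ ^ (d - v j) - 1) =
      (-1) ^ (Finset.univ.filter fun j => ¬ ζ ^ v j = 1).card *
        ∏ j ∈ Finset.univ.filter (fun j => ¬ ζ ^ v j = 1), (ζ ^ v j - 1) := by
  rw [← Finset.sum_filter_add_sum_filter_not Finset.univ (fun j => ζ ^ v j = 1), pow_add,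
    ← Finset.prod_pow_eq_pow_sum, ← Finset.prod_pow_eq_pow_sum,
    Finset.prod_eq_one fun j hj => (Finset.mem_filter.1 hj).2, one_mul,
    ← Finset.prod_mul_distrib, ← Finset.prod_neg]
  refine Finset.prod_congr rfl fun j _ => ?_
  have h : ζ ^ v j * ζ ^ (d - v j) = 1 := by rw [← pow_add, Nat.add_sub_cancel' (hvd j), hζ]
  linear_combination h

theorem eval_eq_neg_one_pow_mul_prod_of_pow_eq_one {K ι : Type*} [Field K] [CharZero K]
    [DecidableEq K] [Fintype ι] {v : ι → ℕ} {d : ℕ} (hv : ∀ j, 0 < v j) (hvd : ∀ j, v j ≤ d)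
    {P : K[X]}
    (hP : P * ∏ j, ((X : K[X]) ^ v j - 1) = X ^ (∑ j, v j) * ∏ j, ((X : K[X]) ^ (d - v j) - 1))
    {ζ : K} (hζ0 : ζ ≠ 0) (hζ : ζ ^ d = 1) :
    P.eval ζ = (-1) ^ (Fintype.card ι - (Finset.univ.filter fun j => ζ ^ v j = 1).card) *
      ∏ j ∈ Finset.univ.filter (fun j => ζ ^ v j = 1), (((d : K) - v j) / v j) := by
  set M := Finset.univ.filter fun j => ζ ^ v j = 1
  set N := Finset.univ.filter fun j => ¬ ζ ^ v j = 1
  have hdv : ∀ j, ζ ^ (d - v j) * ζ ^ v j = 1 := fun j => by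
    rw [← pow_add, Nat.sub_add_cancel (hvd j), hζ]
  have hcancel := eval_mul_prod_derivative_eq_of_mul_prod_eq (s := M) (a := ζ) (p := P)
    (q := X ^ (∑ j, v j)) (f := fun j => X ^ v j - 1) (g := fun j => X ^ (d - v j) - 1)
    (F := ∏ j ∈ N, ((X : K[X]) ^ v j - 1)) (G := ∏ j ∈ N, ((X : K[X]) ^ (d - v j) - 1))
    (by rwa [Finset.prod_filter_mul_prod_filter_not, Finset.prod_filter_mul_prod_filter_not])
    (fun j hj => by simp [(Finset.mem_filter.1 hj).2])
    (fun j hj => by simpa [sub_eq_zero, (Finset.mem_filter.1 hj).2] using hdv j)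
  simp only [eval_prod, eval_pow, eval_X, eval_sub, eval_one] at hcancel
  have hA : ∏ j ∈ M, eval ζ (derivative (X ^ v j - 1)) = ∏ j ∈ M, ((v j : K) * ζ⁻¹) :=
    Finset.prod_congr rfl fun j hj =>
      eval_derivative_X_pow_sub_one_of_pow_eq_one (Finset.mem_filter.1 hj).2
  have hB : ∏ j ∈ M, eval ζ (derivative (X ^ (d - v j) - 1)) =
      (∏ j ∈ M, (((d : K) - v j) / v j)) * ∏ j ∈ M, ((v j : K) * ζ⁻¹) := by
    rw [← Finset.prod_mul_distrib]
    refine Finset.prod_congr rfl fun j hj => ?_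
    have h1 : ζ ^ (d - v j) = 1 := by simpa [(Finset.mem_filter.1 hj).2] using hdv j
    have h2 : (v j : K) ≠ 0 := Nat.cast_ne_zero.2 (hv j).ne'
    rw [eval_derivative_X_pow_sub_one_of_pow_eq_one h1, Nat.cast_sub (hvd j)]
    field_simp
  have hN := pow_sum_mul_prod_pow_sub_sub_one hvd hζ
  have hcard : N.card = Fintype.card ι - M.card := by
    have h : M.card + N.card = Fintype.card ι :=
      Finset.card_filter_add_card_filter_not (s := Finset.univ) _
    omega
  have hA0 : ∏ j ∈ M, ((v j : K) * ζ⁻¹) ≠ 0 := Finset.prod_ne_zero_iff.2 fun j _ =>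
    mul_ne_zero (Nat.cast_ne_zero.2 (hv j).ne') (inv_ne_zero hζ0)
  have hQ0 : ∏ j ∈ N, (ζ ^ v j - 1) ≠ 0 := Finset.prod_ne_zero_iff.2 fun j hj =>
    sub_ne_zero.2 (Finset.mem_filter.1 hj).2
  rw [hA, hB] at hcancel
  rw [← hcard]
  refine mul_right_cancel₀ (mul_ne_zero hA0 hQ0) ?_
  linear_combination
    hcancel + (∏ j ∈ M, (((d : K) - v j) / v j)) * (∏ j ∈ M, ((v j : K) * ζ⁻¹)) * hN

theorem aeval_exp_eq_neg_one_pow_mul_prod {n : ℕ} {v : Fin n → ℕ} {d : ℕ}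
    (hv : ∀ i, 0 < v i) (hvd : ∀ i, v i ≤ d) {s t : Fin n → ℕ}
    (hst : ∀ i, v i * t i = s i * d) (hcop : ∀ i, Nat.Coprime (s i) (t i)) {P : ℤ[X]}
    (hP : P * ∏ j, ((X : ℤ[X]) ^ v j - 1) = X ^ (∑ j, v j) * ∏ j, ((X : ℤ[X]) ^ (d - v j) - 1))
    (k : ℕ) :
    aeval (Complex.exp (2 * Real.pi * Complex.I * k / d)) P =
      (-1 : ℂ) ^ (n - (Finset.univ.filter fun j => t j ∣ k).card) *
        ∏ j ∈ Finset.univ.filter (fun j => t j ∣ k), (((d : ℂ) - v j) / v j) := by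
  set ζ := Complex.exp (2 * Real.pi * Complex.I * k / d)
  have hmem : ∀ j, t j ∣ k ↔ ζ ^ v j = 1 := fun j => by
    have hd : 0 < d := (hv j).trans_le (hvd j)
    rw [dvd_iff_dvd_mul_of_mul_eq_mul (hst j) (hcop j) hd,
      exp_two_pi_I_mul_div_pow_eq_one_iff k d _ hd.ne']
  have hζ : ζ ^ d = 1 := by
    rcases eq_or_ne d 0 with hd | hd
    · rw [hd, pow_zero]
    · exact (exp_two_pi_I_mul_div_pow_eq_one_iff k d d hd).2 (dvd_mul_left d k)
  have hPC := congrArg (Polynomial.map (algebraMap ℤ ℂ)) hP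
  simp only [Polynomial.map_mul, Polynomial.map_prod, Polynomial.map_pow, Polynomial.map_sub,
    Polynomial.map_one, Polynomial.map_X] at hPC
  rw [aeval_def, eval₂_eq_eval_map, eval_eq_neg_one_pow_mul_prod_of_pow_eq_one hv hvd hPC
    (Complex.exp_ne_zero _) hζ, Fintype.card_fin, Finset.filter_congr fun j _ => (hmem j).symm]

theorem statement9_general (n : ℕ) (v : Fin n → ℕ) (d : ℕ)
    (hv : ∀ i, 0 < v i) (hvd : ∀ i, v i < d)
    (s t : Fin n → ℕ)
    (hst : ∀ i, v i * t i = s i * d) (hcop : ∀ i, Nat.Coprime (s i) (t i))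
    (P : Polynomial ℤ)
    (hP : P * ∏ j : Fin n, ((Polynomial.X : Polynomial ℤ) ^ (v j) - 1) =
        Polynomial.X ^ (∑ j : Fin n, v j) *
          ∏ j : Fin n, ((Polynomial.X : Polynomial ℤ) ^ (d - v j) - 1)) :
    (∀ k : ℕ,
      Polynomial.aeval (Complex.exp (2 * Real.pi * Complex.I * k / d)) P =
        (-1 : ℂ) ^ (n - (Finset.univ.filter (fun j : Fin n => t j ∣ k)).card) *
          ∏ j ∈ Finset.univ.filter (fun j : Fin n => t j ∣ k),
            (((d : ℂ) - (v j : ℂ)) / (v j : ℂ)))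
    ∧ ∀ k : ℕ, 0 < k → ∃ a : ℕ, 0 < a ∧
        (∏ j ∈ Finset.univ.filter (fun j : Fin n => t j ∣ k),
          (((d : ℚ) - (v j : ℚ)) / (v j : ℚ))) = (a : ℚ) := by
  have hvalue := aeval_exp_eq_neg_one_pow_mul_prod hv (fun i => (hvd i).le) hst hcop hP
  refine ⟨hvalue, fun k _ => exists_nat_eq_of_isIntegral_ratCast (K := ℂ) ?_ ?_⟩
  · exact Finset.prod_pos fun j _ =>
      div_pos (sub_pos.2 (by exact_mod_cast hvd j)) (by exact_mod_cast hv j)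
  · set ε : ℂ := (-1) ^ (n - (Finset.univ.filter fun j => t j ∣ k).card)
    have hε : ε * ε = 1 := by rw [← mul_pow, neg_one_mul, neg_neg, one_pow]
    have hμ : ((∏ j ∈ Finset.univ.filter (fun j => t j ∣ k), (((d : ℚ) - v j) / v j) : ℚ) : ℂ) =
        ε * aeval (Complex.exp (2 * Real.pi * Complex.I * k / d)) P := by
      rw [hvalue k, ← mul_assoc, hε, one_mul]
      push_cast
      rfl
    rw [hμ]
    exact (isIntegral_one.neg.pow _).mul (isIntegral_aeval_exp_two_pi_I_mul_div P k d)

/-- Lemma 5.4 (d). -/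
theorem statement9 (n : ℕ) (hn : 1 ≤ n) (v : Fin n → ℕ) (d : ℕ)
    (hv : ∀ i, 0 < v i) (hvd : ∀ i, v i < d)
    (s t : Fin n → ℕ) (hpos : ∀ i, 0 < s i ∧ 0 < t i)
    (hst : ∀ i, v i * t i = s i * d) (hcop : ∀ i, Nat.Coprime (s i) (t i))
    (hC2bar : CondC2bar v d)
    (P : Polynomial ℤ)
    (hP : P * ∏ j : Fin n, ((Polynomial.X : Polynomial ℤ) ^ (v j) - 1) =
        Polynomial.X ^ (∑ j : Fin n, v j) *
          ∏ j : Fin n, ((Polynomial.X : Polynomial ℤ) ^ (d - v j) - 1)) :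
    (∀ k : ℕ,
      Polynomial.aeval (Complex.exp (2 * Real.pi * Complex.I * k / d)) P =
        (-1 : ℂ) ^ (n - (Finset.univ.filter (fun j : Fin n => t j ∣ k)).card) *
          ∏ j ∈ Finset.univ.filter (fun j : Fin n => t j ∣ k),
            (((d : ℂ) - (v j : ℂ)) / (v j : ℂ)))
    ∧ ∀ k : ℕ, 0 < k → ∃ a : ℕ, 0 < a ∧
        (∏ j ∈ Finset.univ.filter (fun j : Fin n => t j ∣ k),
          (((d : ℚ) - (v j : ℚ)) / (v j : ℚ))) = (a : ℚ) :=
  statement9_general n v d hv hvd s t hst hcop P hP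

end WeightPaper
end
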